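/- The map t ↦ H_t is an order-reversing bijection from T onto IS(isolated(Γ)); that is, it is a bijection of T onto the set of isolated subgroups of Γ having an immediate predecessor in isolated(Γ), and for all s, t ∈ T one has s ≤ t if and only if H_t ⊆ H_s. -/

import Mathlib

/-- The carrier of Γ: functions `T → G` with well-ordered support. -/
def Gamma (T G : Type*) [LinearOrder T] [Zero G] [LT G] : Set (T → G) :=
  {f | (Function.support f).IsWF}

/-- The (left-to-right lexicographic) order on functions `T → G`:
`f ≤ g` iff `f = g` or `f` and `g` agree before some point `t` at which `f t < g t`. -/
def lexLE {T G : Type*} [LinearOrder T] [LT G] (f g : T → G) : Prop :=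
  f = g ∨ ∃ t, (∀ s, s < t → f s = g s) ∧ f t < g t

/-- `H` is an isolated subgroup of Γ: a subgroup of Γ that is convex for the
lexicographic order. -/
def IsIsolated (T G : Type*) [LinearOrder T] [AddCommGroup G] [LinearOrder G]
    [IsOrderedAddMonoid G]
    (H : Set (T → G)) : Prop :=
  H ⊆ Gamma T G ∧ (0 : T → G) ∈ H ∧ (∀ f ∈ H, ∀ g ∈ H, f + g ∈ H) ∧
  (∀ f ∈ H, -f ∈ H) ∧
  ∀ h ∈ H, ∀ g ∈ Gamma T G, lexLE 0 g → lexLE g h → g ∈ H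

/-- The T-isolated subgroup `H_t`: elements of Γ vanishing strictly before `t`. -/
def Ht (T G : Type*) [LinearOrder T] [Zero G] [LT G] (t : T) : Set (T → G) :=
  {f ∈ Gamma T G | ∀ s, s < t → f s = 0}

/-- The dual T-isolated subgroup `dH_t`: elements of Γ vanishing at and before `t`. -/
def dHt (T G : Type*) [LinearOrder T] [Zero G] [LT G] (t : T) : Set (T → G) :=
  {f ∈ Gamma T G | ∀ s, s ≤ t → f s = 0}

/-- `X` and `Y` are immediate neighbors in `B` (ordered by inclusion). -/
def ImmNbr {α : Type*} (B : Set (Set α)) (X Y : Set α) : Prop :=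
  X ∈ B ∧ Y ∈ B ∧ X ⊂ Y ∧ ¬∃ Z ∈ B, X ⊂ Z ∧ Z ⊂ Y

/-- `ISet B` is the set of members of `B` having an immediate predecessor in `B`. -/
def ISet {α : Type*} (B : Set (Set α)) : Set (Set α) := {Y | ∃ X, ImmNbr B X Y}

/-- `IPSet B` is the set of members of `B` having an immediate successor in `B`. -/
def IPSet {α : Type*} (B : Set (Set α)) : Set (Set α) := {X | ∃ Y, ImmNbr B X Y}

/-!
An isolated subgroup `H` is determined by the union `U` of the supports of its elements: if
`h ∈ H` has leading coordinate `m`, the archimedean property lets multiples of `±h` dominate every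
element of `H_m`, so `H = {f ∈ Γ | supp f ⊆ U}` with `U` an upper set of `T`. Conversely every such
set is isolated, and `U ↦ H_U` is an order embedding. Hence the isolated subgroups with an immediate
predecessor correspond to the upper sets covering another upper set, which are exactly the
`Ici t`, and `H_{Ici t} = H_t`.
-/

section Gamma

variable {T G : Type*} [LinearOrder T] [AddCommGroup G] [LinearOrder G]

lemma zero_mem_Gamma : (0 : T → G) ∈ Gamma T G := by
  simp [Gamma]

lemma neg_mem_Gamma {f : T → G} (hf : f ∈ Gamma T G) : -f ∈ Gamma T G := by
  simpa [Gamma] using hf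

lemma add_mem_Gamma {f g : T → G} (hf : f ∈ Gamma T G) (hg : g ∈ Gamma T G) :
    f + g ∈ Gamma T G :=
  (hf.union hg).mono (Function.support_add f g)

lemma exists_leading_le {f : T → G} (hf : f ∈ Gamma T G) {t : T} (ht : f t ≠ 0) :
    ∃ m ≤ t, f m ≠ 0 ∧ ∀ s < m, f s = 0 := by
  have hne : (Function.support f).Nonempty := ⟨t, ht⟩
  refine ⟨hf.min hne, hf.min_le hne ht, hf.min_mem hne, fun s hs => ?_⟩
  by_contra hs0
  exact hf.not_lt_min hne hs0 hs

lemma lexLE_zero_or_lexLE_zero_neg [IsOrderedAddMonoid G] {f : T → G} (hf : f ∈ Gamma T G) :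
    lexLE 0 f ∨ lexLE 0 (-f) := by
  by_cases hf0 : f = 0
  · exact Or.inl (Or.inl hf0.symm)
  obtain ⟨t, ht⟩ := Function.support_nonempty_iff.2 hf0
  obtain ⟨m, -, hm, hbelow⟩ := exists_leading_le hf ht
  rcases hm.lt_or_gt with hneg | hpos
  · exact Or.inr (Or.inr ⟨m, fun s hs => by simp [hbelow s hs], by simpa using hneg⟩)
  · exact Or.inl (Or.inr ⟨m, fun s hs => (hbelow s hs).symm, hpos⟩)

lemma exists_le_apply_ne_zero_of_lexLE {g h : T → G} (hg0 : lexLE 0 g) (hgh : lexLE g h)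
    {t : T} (ht : g t ≠ 0) : ∃ s ≤ t, h s ≠ 0 := by
  rcases hg0 with rfl | ⟨t₀, hbelow, hpos⟩
  · exact absurd rfl ht
  have ht₀ : t₀ ≤ t := not_lt.1 fun hlt => ht (hbelow t hlt).symm
  have hpos : 0 < g t₀ := hpos
  rcases hgh with rfl | ⟨t₁, hagree, hlt⟩
  · exact ⟨t₀, ht₀, hpos.ne'⟩
  rcases le_or_gt t₁ t₀ with h₁ | h₁
  · have hg : 0 ≤ g t₁ := h₁.lt_or_eq.elim (fun l => (hbelow t₁ l).le) fun e => e ▸ hpos.le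
    exact ⟨t₁, h₁.trans ht₀, (hg.trans_lt hlt).ne'⟩
  · exact ⟨t₀, ht₀, hagree t₀ h₁ ▸ hpos.ne'⟩

end Gamma

section SupportedIn

variable {T G : Type*} [LinearOrder T] [AddCommGroup G] [LinearOrder G]

def supportedIn (U : Set T) : Set (T → G) :=
  {f ∈ Gamma T G | Function.support f ⊆ U}

def unionSupport (H : Set (T → G)) : Set T :=
  ⋃ f ∈ H, Function.support f

lemma Ht_eq_supportedIn_Ici (t : T) : Ht T G t = supportedIn (Set.Ici t) := by
  ext f
  refine and_congr_right fun _ => ⟨fun h s hs => ?_, fun h s hs => ?_⟩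
  · exact not_lt.1 fun hlt => hs (h s hlt)
  · by_contra hne
    exact not_le.2 hs (h hne)

lemma single_mem_supportedIn_iff {U : Set T} {t : T} {c : G} (hc : c ≠ 0) :
    Pi.single t c ∈ supportedIn U ↔ t ∈ U := by
  refine ⟨fun h => h.2 (by simpa using hc), fun ht => ⟨?_, ?_⟩⟩
  · exact (Set.finite_singleton t).isWF.mono (Pi.support_single_subset)
  · exact (Pi.support_single_subset).trans (Set.singleton_subset_iff.2 ht)

lemma supportedIn_subset_supportedIn_iff [Nontrivial G] {U V : Set T} :
    supportedIn (G := G) U ⊆ supportedIn V ↔ U ⊆ V := by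
  obtain ⟨c, hc⟩ := exists_ne (0 : G)
  refine ⟨fun h t ht => ?_, fun h f hf => ⟨hf.1, hf.2.trans h⟩⟩
  exact (single_mem_supportedIn_iff hc).1 (h ((single_mem_supportedIn_iff hc).2 ht))

def supportedInEmbedding [Nontrivial G] : Set T ↪o Set (T → G) :=
  OrderEmbedding.ofMapLEIff supportedIn fun _ _ => supportedIn_subset_supportedIn_iff

variable [IsOrderedAddMonoid G]

lemma isIsolated_supportedIn {U : Set T} (hU : IsUpperSet U) :
    IsIsolated T G (supportedIn U) := by
  refine ⟨fun f hf => hf.1, ⟨zero_mem_Gamma, by simp⟩, ?_, ?_, ?_⟩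
  · exact fun f hf g hg => ⟨add_mem_Gamma hf.1 hg.1,
      (Function.support_add f g).trans (Set.union_subset hf.2 hg.2)⟩
  · exact fun f hf => ⟨neg_mem_Gamma hf.1, by simpa using hf.2⟩
  · intro h hh g hg hg0 hgh
    refine ⟨hg, fun t ht => ?_⟩
    obtain ⟨s, hst, hs⟩ := exists_le_apply_ne_zero_of_lexLE hg0 hgh ht
    exact hU hst (hh.2 hs)

end SupportedIn

namespace IsIsolated

variable {T G : Type*} [LinearOrder T] [AddCommGroup G] [LinearOrder G] [IsOrderedAddMonoid G]
  {H : Set (T → G)}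

lemma nsmul_mem (hH : IsIsolated T G H) {f : T → G} (hf : f ∈ H) (n : ℕ) : n • f ∈ H := by
  induction n with
  | zero => simpa using hH.2.1
  | succ n ih => simpa [succ_nsmul] using hH.2.2.1 _ ih _ hf

/-- Up to sign, every element of `Ht m` lies below some multiple `n • h`, by the archimedean
property of `G` at the coordinate `m`. -/
lemma Ht_subset_of_leading [Archimedean G] (hH : IsIsolated T G H) {h : T → G} (hh : h ∈ H)
    {m : T} (hm : h m ≠ 0) (hbelow : ∀ s < m, h s = 0) : Ht T G m ⊆ H := by
  obtain ⟨p, hp, hpm, hpbelow⟩ : ∃ p ∈ H, 0 < p m ∧ ∀ s < m, p s = 0 := by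
    rcases hm.lt_or_gt with hneg | hpos
    · exact ⟨-h, hH.2.2.2.1 h hh, by simpa using hneg, fun s hs => by simp [hbelow s hs]⟩
    · exact ⟨h, hh, hpos, hbelow⟩
  have hnonneg : ∀ g ∈ Ht T G m, lexLE 0 g → g ∈ H := by
    rintro g ⟨hg, hgbelow⟩ hg0
    obtain ⟨n, hn⟩ := Archimedean.arch (g m) hpm
    refine hH.2.2.2.2 _ (hH.nsmul_mem hp (n + 1)) g hg hg0 (Or.inr ⟨m, fun s hs => ?_, ?_⟩)
    · simp [hgbelow s hs, hpbelow s hs]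
    · calc g m ≤ n • p m := hn
        _ < (n + 1) • p m := by rw [succ_nsmul]; exact lt_add_of_pos_right _ hpm
  intro g hg
  rcases lexLE_zero_or_lexLE_zero_neg hg.1 with hg0 | hg0
  · exact hnonneg g hg hg0
  · have hneg : -g ∈ Ht T G m := ⟨neg_mem_Gamma hg.1, fun s hs => by simp [hg.2 s hs]⟩
    simpa using hH.2.2.2.1 _ (hnonneg _ hneg hg0)

lemma Ht_subset [Archimedean G] (hH : IsIsolated T G H) {t : T} (ht : t ∈ unionSupport H) :
    Ht T G t ⊆ H := by
  obtain ⟨h, hh, hht⟩ := Set.mem_iUnion₂.1 ht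
  obtain ⟨m, hmt, hm, hbelow⟩ := exists_leading_le (hH.1 hh) hht
  exact fun f hf => hH.Ht_subset_of_leading hh hm hbelow
    ⟨hf.1, fun s hs => hf.2 s (hs.trans_le hmt)⟩

lemma isUpperSet_unionSupport [Archimedean G] [Nontrivial G] (hH : IsIsolated T G H) :
    IsUpperSet (unionSupport H) := by
  intro t t' htt' ht
  obtain ⟨c, hc⟩ := exists_ne (0 : G)
  have hsingle : Pi.single t' c ∈ Ht T G t := by
    rw [Ht_eq_supportedIn_Ici]
    exact (single_mem_supportedIn_iff hc).2 htt'
  exact Set.mem_iUnion₂.2 ⟨_, hH.Ht_subset ht hsingle, by simpa using hc⟩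

lemma eq_supportedIn_unionSupport [Archimedean G] (hH : IsIsolated T G H) :
    H = supportedIn (unionSupport H) := by
  refine subset_antisymm (fun f hf => ⟨hH.1 hf, Set.subset_biUnion_of_mem hf⟩) ?_
  rintro f ⟨hf, hfsupp⟩
  by_cases hf0 : f = 0
  · exact hf0 ▸ hH.2.1
  obtain ⟨t, ht⟩ := Function.support_nonempty_iff.2 hf0
  obtain ⟨t₀, -, ht₀, hbelow⟩ := exists_leading_le hf ht
  exact hH.Ht_subset (hfsupp ht₀) ⟨hf, hbelow⟩

end IsIsolated

lemma setOf_isIsolated_eq_image {T G : Type*} [LinearOrder T] [AddCommGroup G] [LinearOrder G]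
    [IsOrderedAddMonoid G] [Archimedean G] [Nontrivial G] :
    {H : Set (T → G) | IsIsolated T G H} = supportedIn '' {U : Set T | IsUpperSet U} := by
  ext H
  refine ⟨fun hH => ⟨_, hH.isUpperSet_unionSupport, hH.eq_supportedIn_unionSupport.symm⟩, ?_⟩
  rintro ⟨U, hU, rfl⟩
  exact isIsolated_supportedIn hU

lemma ISet_image_orderEmbedding {α β : Type*} (f : Set β ↪o Set α) (C : Set (Set β)) :
    ISet (f '' C) = f '' ISet C := by
  ext Y
  constructor
  · rintro ⟨_, ⟨U, hU, rfl⟩, ⟨V, hV, rfl⟩, hUV, hbetween⟩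
    refine ⟨V, ⟨U, hU, hV, f.lt_iff_lt.1 hUV, ?_⟩, rfl⟩
    rintro ⟨W, hW, hUW, hWV⟩
    exact hbetween ⟨f W, ⟨W, hW, rfl⟩, f.lt_iff_lt.2 hUW, f.lt_iff_lt.2 hWV⟩
  · rintro ⟨V, ⟨U, hU, hV, hUV, hbetween⟩, rfl⟩
    refine ⟨f U, ⟨U, hU, rfl⟩, ⟨V, hV, rfl⟩, f.lt_iff_lt.2 hUV, ?_⟩
    rintro ⟨_, ⟨W, hW, rfl⟩, hUW, hWV⟩
    exact hbetween ⟨W, hW, f.lt_iff_lt.1 hUW, f.lt_iff_lt.1 hWV⟩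

/-- An upper set covering another upper set `V` is `V ∪ Ici t` for any new point `t`, and this
union is `Ici t` because `V ⊆ Ioi t`. -/
lemma ISet_setOf_isUpperSet {T : Type*} [LinearOrder T] :
    ISet {U : Set T | IsUpperSet U} = Set.range Set.Ici := by
  ext U
  constructor
  · rintro ⟨V, hV, hU, hVU, hbetween⟩
    obtain ⟨t, htU, htV⟩ := Set.exists_of_ssubset hVU
    have hVt : V ⊆ Set.Ioi t := fun s hs => not_le.1 fun hst => htV (hV hst hs)
    have hW : V ∪ Set.Ici t = U := by
      by_contra hne
      refine hbetween ⟨V ∪ Set.Ici t, hV.union (isUpperSet_Ici t), ?_, ?_⟩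
      · exact Set.ssubset_of_ssubset_of_subset
          (Set.ssubset_iff_insert.2 ⟨t, htV, subset_rfl⟩) (by simp [Set.insert_subset_iff])
      · exact Set.ssubset_iff_subset_ne.2
          ⟨Set.union_subset hVU.subset fun s hs => hU hs htU, hne⟩
    exact ⟨t, by rw [← hW, Set.union_eq_right.2 (hVt.trans Set.Ioi_subset_Ici_self)]⟩
  · rintro ⟨t, rfl⟩
    refine ⟨Set.Ioi t, isUpperSet_Ioi t, isUpperSet_Ici t, Set.Ioi_ssubset_Ici_self, ?_⟩
    rintro ⟨W, hW, htW, hWt⟩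
    have ht : t ∉ W := fun ht => hWt.not_subset fun s hs => hW hs ht
    exact htW.not_subset fun s hs => lt_of_le_of_ne (hWt.subset hs) (by rintro rfl; exact ht hs)

theorem stmt12_general {T G : Type*} [LinearOrder T]
    [AddCommGroup G] [LinearOrder G] [IsOrderedAddMonoid G] [Archimedean G] [Nontrivial G] :
    (∀ t : T, Ht T G t ∈ ISet {H : Set (T → G) | IsIsolated T G H}) ∧
    (∀ s t : T, Ht T G s = Ht T G t → s = t) ∧
    (∀ H ∈ ISet {H : Set (T → G) | IsIsolated T G H}, ∃ t : T, Ht T G t = H) ∧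
    (∀ s t : T, s ≤ t ↔ Ht T G t ⊆ Ht T G s) := by
  have hHt : Ht T G = supportedIn ∘ Set.Ici := funext Ht_eq_supportedIn_Ici
  have hIS : ISet {H : Set (T → G) | IsIsolated T G H} = Set.range (Ht T G) := by
    rw [setOf_isIsolated_eq_image]
    refine (ISet_image_orderEmbedding supportedInEmbedding _).trans ?_
    rw [ISet_setOf_isUpperSet, ← Set.range_comp, hHt]
    rfl
  have hle : ∀ s t : T, s ≤ t ↔ Ht T G t ⊆ Ht T G s := fun s t => by
    rw [hHt]
    exact (supportedIn_subset_supportedIn_iff.trans Set.Ici_subset_Ici).symm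
  refine ⟨fun t => hIS.superset (Set.mem_range_self t), fun s t hst => ?_,
    fun H hH => hIS.subset hH, hle⟩
  exact le_antisymm ((hle s t).2 hst.ge) ((hle t s).2 hst.le)

theorem stmt12 {T G : Type*} [LinearOrder T] [Nonempty T]
    [AddCommGroup G] [LinearOrder G] [IsOrderedAddMonoid G] [Archimedean G] [Nontrivial G] :
    (∀ t : T, Ht T G t ∈ ISet {H : Set (T → G) | IsIsolated T G H}) ∧
    (∀ s t : T, Ht T G s = Ht T G t → s = t) ∧
    (∀ H ∈ ISet {H : Set (T → G) | IsIsolated T G H}, ∃ t : T, Ht T G t = H) ∧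
    (∀ s t : T, s ≤ t ↔ Ht T G t ⊆ Ht T G s) :=
  stmt12_general
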